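/- Upper semi-continuity of asymptotic entropy: if probability measures μ_i on a countable group converge pointwise to μ and the family {μ_i} is entropy-tight, then limsup_i h(μ_i) ≤ h(μ), where h(ν) = lim_n H(ν^{*n})/n is the asymptotic entropy. -/

import Mathlib

open Real Filter

/-- A probability measure on a countable set, given by its mass function. -/
def IsProb {X : Type*} (μ : X → ℝ) : Prop := (∀ x, 0 ≤ μ x) ∧ HasSum μ 1

/-- Shannon entropy of a measure on a countable set. -/
noncomputable def entropy {X : Type*} (μ : X → ℝ) : ℝ := ∑' x, negMulLog (μ x)

/-- Entropy-tightness of a family of measures. -/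
def EntTight {ι X : Type*} (μ : ι → X → ℝ) : Prop :=
  ∀ ε > (0 : ℝ), ∃ K : Finset X, ∀ i,
    (∑' x, ((↑K : Set X)ᶜ).indicator (fun y => negMulLog (μ i y)) x) < ε

/-- Convolution of measures on a group. -/
noncomputable def conv {G : Type*} [Group G] (μ ν : G → ℝ) : G → ℝ :=
  fun z => ∑' x, μ x * ν (x⁻¹ * z)

/-- `n`-fold convolution power of a measure. -/
noncomputable def convPow {G : Type*} [Group G] [DecidableEq G] (μ : G → ℝ) : ℕ → G → ℝ
  | 0 => fun g => if g = 1 then 1 else 0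
  | n + 1 => conv μ (convPow μ n)

/-- The asymptotic entropy `h(μ) = lim_n H(μ^{*n})/n` of the random walk with step
distribution `μ` (written as a `limsup`, which equals the limit when it exists). -/
noncomputable def asympEnt {G : Type*} [Group G] [DecidableEq G] (μ : G → ℝ) : ℝ :=
  limsup (fun n : ℕ => entropy (convPow μ n) / n) atTop

/-!
Entropy is subadditive under convolution, so by Fekete's lemma `h(μ) = inf_N H(μ^{*N}) / N`
when `H(μ) < ∞`; when `H(μ) = ∞`, Jensen's inequality gives `H(μ^{*n}) = ∞` for all `n ≥ 1` and
`h(μ)` is the junk value `0`. Fix `N`. Scheffé's lemma upgrades `μᵢ → ν` to `ℓ¹` convergence,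
which passes pointwise convergence on to the convolution powers. Entropy-tightness passes on as
well: the entropy of `μ * σ` outside `K₁ * K₂` is bounded by the entropy tails of `μ`, `σ` outside
`K₁`, `K₂` plus their mass tails times the total entropies. So `H(μᵢ^{*N})` is eventually at most
`H(ν^{*N}) + ε`, whence `limsup h(μᵢ) ≤ H(ν^{*N}) / N` for every `N`; let `N → ∞`. Lower
semicontinuity of entropy keeps `H(ν)` finite as soon as infinitely many `μᵢ` have finite entropy.
-/

open scoped ENNReal Topology Pointwise

section NegMulLog

variable {X : Type*}

theorem negMulLog_add_le {a b : ℝ} (ha : 0 ≤ a) (hb : 0 ≤ b) :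
    negMulLog (a + b) ≤ negMulLog a + negMulLog b := by
  rcases ha.eq_or_lt with rfl | ha
  · simp
  rcases hb.eq_or_lt with rfl | hb
  · simp
  have hla : log a ≤ log (a + b) := log_le_log ha (by linarith)
  have hlb : log b ≤ log (a + b) := log_le_log hb (by linarith)
  simp only [negMulLog]
  nlinarith [mul_le_mul_of_nonneg_left hla ha.le, mul_le_mul_of_nonneg_left hlb hb.le]

theorem ofReal_negMulLog_le_tsum {f : X → ℝ} {s : ℝ} (hf : ∀ x, 0 ≤ f x) (hs : HasSum f s) :
    ENNReal.ofReal (negMulLog s) ≤ ∑' x, ENNReal.ofReal (negMulLog (f x)) := by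
  have hlim : Tendsto (fun F : Finset X => ENNReal.ofReal (negMulLog (∑ x ∈ F, f x))) atTop
      (𝓝 (ENNReal.ofReal (negMulLog s))) :=
    ENNReal.tendsto_ofReal ((continuous_negMulLog.tendsto s).comp hs)
  refine le_of_tendsto' hlim fun F => ?_
  calc ENNReal.ofReal (negMulLog (∑ x ∈ F, f x))
      ≤ ∑ x ∈ F, ENNReal.ofReal (negMulLog (f x)) :=
        Finset.le_sum_of_subadditive_on_pred (fun a => ENNReal.ofReal (negMulLog a)) (0 ≤ ·)
          (by simp) (fun a b ha hb => (ENNReal.ofReal_le_ofReal (negMulLog_add_le ha hb)).trans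
            ENNReal.ofReal_add_le) (fun _ _ => add_nonneg) f fun x _ => hf x
    _ ≤ ∑' x, ENNReal.ofReal (negMulLog (f x)) := ENNReal.sum_le_tsum F

theorem negMulLog_le_tangent {p c : ℝ} (hp : 0 ≤ p) (hc : 0 < c) :
    negMulLog p ≤ c - p - p * log c := by
  rcases hp.eq_or_lt with rfl | hp
  · simpa using hc.le
  have h := mul_le_mul_of_nonneg_left (log_le_sub_one_of_pos (div_pos hc hp)) hp.le
  have hcp : p * (c / p - 1) = c - p := by field_simp
  rw [log_div hc.ne' hp.ne', hcp] at h
  simp only [negMulLog]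
  linarith

theorem tsum_mul_negMulLog_le_negMulLog_tsum {w p : X → ℝ} (hw : ∀ x, 0 ≤ w x) (hw1 : HasSum w 1)
    (hp0 : ∀ x, 0 ≤ p x) (hp1 : ∀ x, p x ≤ 1) :
    ∑' x, w x * negMulLog (p x) ≤ negMulLog (∑' x, w x * p x) := by
  have hwp : HasSum (fun x => w x * p x) (∑' x, w x * p x) :=
    (hw1.summable.of_nonneg_of_le (fun x => mul_nonneg (hw x) (hp0 x))
      fun x => mul_le_of_le_one_right (hw x) (hp1 x)).hasSum
  have hwh : Summable fun x => w x * negMulLog (p x) :=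
    hw1.summable.of_nonneg_of_le (fun x => mul_nonneg (hw x) (negMulLog_nonneg (hp0 x) (hp1 x)))
      fun x => mul_le_of_le_one_right (hw x)
        ((negMulLog_le_one_sub_self (hp0 x)).trans (by linarith [hp0 x]))
  generalize ∑' x, w x * p x = c at hwp ⊢
  rcases (hwp.nonneg fun x => mul_nonneg (hw x) (hp0 x)).eq_or_lt with hc | hc
  · rw [← hc] at hwp
    have hzero := (hasSum_zero_iff_of_nonneg fun x => mul_nonneg (hw x) (hp0 x)).1 hwp
    have hterm : ∀ x, w x * negMulLog (p x) = 0 := fun x => by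
      rcases mul_eq_zero.1 (congrFun hzero x) with h | h <;> simp [h]
    simp [hterm, ← hc]
  · have hlin : HasSum (fun x => c * w x - w x * p x - w x * p x * log c)
        (c * 1 - c - c * log c) :=
      ((hw1.mul_left c).sub hwp).sub (hwp.mul_right (log c))
    refine (hasSum_le (fun x => ?_) hwh.hasSum hlin).trans_eq (by simp only [negMulLog]; ring)
    calc w x * negMulLog (p x) ≤ w x * (c - p x - p x * log c) :=
          mul_le_mul_of_nonneg_left (negMulLog_le_tangent (hp0 x) hc) (hw x)
      _ = c * w x - w x * p x - w x * p x * log c := by ring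

end NegMulLog

theorem tsum_eq_toReal_tsum_ofReal {X : Type*} {f : X → ℝ} (hf : ∀ x, 0 ≤ f x) :
    ∑' x, f x = (∑' x, ENNReal.ofReal (f x)).toReal := by
  rw [ENNReal.tsum_toReal_eq fun _ => ENNReal.ofReal_ne_top]
  simp only [ENNReal.toReal_ofReal (hf _)]

namespace IsProb

variable {X : Type*} {μ : X → ℝ}

theorem summable (h : IsProb μ) : Summable μ := h.2.summable

theorem le_one (h : IsProb μ) (x : X) : μ x ≤ 1 := le_hasSum h.2 x fun y _ => h.1 y

theorem negMulLog_nonneg (h : IsProb μ) (x : X) : 0 ≤ negMulLog (μ x) :=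
  Real.negMulLog_nonneg (h.1 x) (h.le_one x)

theorem negMulLog_le_one (h : IsProb μ) (x : X) : negMulLog (μ x) ≤ 1 :=
  (negMulLog_le_one_sub_self (h.1 x)).trans (by linarith [h.1 x])

theorem entropy_nonneg (h : IsProb μ) : 0 ≤ entropy μ := tsum_nonneg h.negMulLog_nonneg

theorem tsum_ofReal (h : IsProb μ) : ∑' x, ENNReal.ofReal (μ x) = 1 := by
  rw [← ENNReal.ofReal_tsum_of_nonneg h.1 h.summable, h.2.tsum_eq, ENNReal.ofReal_one]

theorem of_tsum_ofReal (h0 : ∀ x, 0 ≤ μ x) (h1 : ∑' x, ENNReal.ofReal (μ x) = 1) : IsProb μ := by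
  have hs : Summable μ := (ENNReal.summable_toReal (h1 ▸ ENNReal.one_ne_top)).congr fun x =>
    ENNReal.toReal_ofReal (h0 x)
  refine ⟨h0, ?_⟩
  rw [← ENNReal.toReal_one, ← h1, ← tsum_eq_toReal_tsum_ofReal h0]
  exact hs.hasSum

end IsProb

/-- Entropy with values in `ℝ≥0∞`; unlike `entropy`, it is `∞` rather than `0` when the series
diverges. -/
noncomputable def eEntropy {X : Type*} (μ : X → ℝ) : ℝ≥0∞ :=
  ∑' x, ENNReal.ofReal (negMulLog (μ x))

theorem entropy_eq_toReal {X : Type*} {μ : X → ℝ} (h : IsProb μ) :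
    entropy μ = (eEntropy μ).toReal :=
  tsum_eq_toReal_tsum_ofReal h.negMulLog_nonneg

theorem entropy_le_add_of_eEntropy_le {X : Type*} {μ ν : X → ℝ} {r : ℝ≥0∞} (hμ : IsProb μ)
    (hν : IsProb ν) (hfin : eEntropy ν ≠ ⊤) (hr : r ≠ ⊤) (h : eEntropy μ ≤ eEntropy ν + r) :
    entropy μ ≤ entropy ν + r.toReal := by
  rw [entropy_eq_toReal hμ, entropy_eq_toReal hν, ← ENNReal.toReal_add hfin hr]
  exact ENNReal.toReal_mono (ENNReal.add_ne_top.2 ⟨hfin, hr⟩) h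

section Tails

variable {ι κ X : Type*}

noncomputable def tailSum (f : X → ℝ≥0∞) (K : Finset X) : ℝ≥0∞ :=
  ∑' x : ↥(K : Set X)ᶜ, f x

theorem sum_add_tailSum (f : X → ℝ≥0∞) (K : Finset X) :
    ∑ x ∈ K, f x + tailSum f K = ∑' x, f x :=
  ENNReal.sum_add_tsum_compl K f

theorem tailSum_le_tsum (f : X → ℝ≥0∞) (K : Finset X) : tailSum f K ≤ ∑' x, f x :=
  le_add_self.trans_eq (sum_add_tailSum f K)

theorem tailSum_eq_tsum_sub {f : X → ℝ≥0∞} (hf : ∑' x, f x ≠ ⊤) (K : Finset X) :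
    tailSum f K = ∑' x, f x - ∑ x ∈ K, f x :=
  ENNReal.eq_sub_of_add_eq (ne_top_of_le_ne_top hf (ENNReal.sum_le_tsum K))
    ((add_comm _ _).trans (sum_add_tailSum f K))

theorem tailSum_eq_tsum_indicator (f : X → ℝ≥0∞) (K : Finset X) :
    tailSum f K = ∑' x, (K : Set X)ᶜ.indicator f x :=
  tsum_subtype _ f

theorem tailSum_eq_tsum_indicator_mul (f : X → ℝ≥0∞) (K : Finset X) :
    tailSum f K = ∑' x, (K : Set X)ᶜ.indicator 1 x * f x := by
  rw [tailSum_eq_tsum_indicator]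
  refine tsum_congr fun x => ?_
  by_cases hx : x ∈ (K : Set X)ᶜ <;> simp [hx]

theorem tailSum_antitone (f : X → ℝ≥0∞) : Antitone (tailSum f) := fun _ _ h =>
  ENNReal.tsum_mono_subtype f (Set.compl_subset_compl.2 (Finset.coe_subset.2 h))

theorem tendsto_tailSum_atTop_zero {f : X → ℝ≥0∞} (hf : ∑' x, f x ≠ ⊤) :
    Tendsto (tailSum f) atTop (𝓝 0) :=
  ENNReal.tendsto_tsum_compl_atTop_zero hf

def UniformlyTight (f : ι → X → ℝ≥0∞) : Prop :=
  Tendsto (fun K : Finset X => ⨆ i, tailSum (f i) K) atTop (𝓝 0)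

theorem UniformlyTight.exists_tailSum_le {f : ι → X → ℝ≥0∞} (h : UniformlyTight f)
    {ε : ℝ≥0∞} (hε : 0 < ε) : ∃ K, ∀ i, tailSum (f i) K ≤ ε :=
  let ⟨K, hK⟩ := (ENNReal.tendsto_nhds_zero.1 h ε hε).exists
  ⟨K, fun i => (le_iSup (fun i => tailSum (f i) K) i).trans hK⟩

theorem UniformlyTight.comp {f : ι → X → ℝ≥0∞} (h : UniformlyTight f) (g : κ → ι) :
    UniformlyTight fun k => f (g k) :=
  tendsto_of_tendsto_of_tendsto_of_le_of_le tendsto_const_nhds h (fun _ => zero_le)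
    fun K => iSup_comp_le (fun i => tailSum (f i) K) g

theorem uniformlyTight_const {f : X → ℝ≥0∞} (hf : ∑' x, f x ≠ ⊤) :
    UniformlyTight fun _ : ι => f :=
  tendsto_of_tendsto_of_tendsto_of_le_of_le tendsto_const_nhds (tendsto_tailSum_atTop_zero hf)
    (fun _ => zero_le) fun _ => iSup_const_le

theorem UniformlyTight.exists_eEntropy_le {μ : ι → X → ℝ} (hμ : ∀ i, IsProb (μ i))
    (h : UniformlyTight fun i x => ENNReal.ofReal (negMulLog (μ i x))) :
    ∃ C ≠ ⊤, ∀ i, eEntropy (μ i) ≤ C := by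
  obtain ⟨K, hK⟩ := h.exists_tailSum_le one_pos
  refine ⟨K.card + 1, by simp, fun i => ?_⟩
  rw [eEntropy, ← sum_add_tailSum]
  gcongr
  · calc ∑ x ∈ K, ENNReal.ofReal (negMulLog (μ i x)) ≤ ∑ _x ∈ K, 1 :=
          Finset.sum_le_sum fun x _ => ENNReal.ofReal_le_one.2 ((hμ i).negMulLog_le_one x)
      _ = K.card := by simp
  · exact hK i

/-- Beyond some index the tails are controlled by those of the limit; the finitely many earlier
terms are handled one by one. -/
theorem uniformlyTight_of_tendsto {f : ℕ → X → ℝ≥0∞} {g : X → ℝ≥0∞} (hg : ∑' x, g x ≠ ⊤)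
    (hf : ∀ i, ∑' x, f i x = ∑' x, g x) (hlim : ∀ x, Tendsto (fun i => f i x) atTop (𝓝 (g x))) :
    UniformlyTight f := by
  refine ENNReal.tendsto_nhds_zero.2 fun ε hε => ?_
  obtain ⟨K₀, hK₀⟩ := ((tendsto_tailSum_atTop_zero hg).eventually (gt_mem_nhds hε)).exists
  have hK₀lim : Tendsto (fun i => tailSum (f i) K₀) atTop (𝓝 (tailSum g K₀)) := by
    simp only [tailSum_eq_tsum_sub (hf _ ▸ hg), tailSum_eq_tsum_sub hg, hf]
    exact ENNReal.Tendsto.sub tendsto_const_nhds (tendsto_finsetSum _ fun x _ => hlim x) (.inl hg)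
  obtain ⟨I, hI⟩ := eventually_atTop.1 (hK₀lim.eventually (gt_mem_nhds hK₀))
  have hearly : ∀ i, ∀ᶠ K in atTop, tailSum (f i) K ≤ ε := fun i =>
    (tendsto_tailSum_atTop_zero ((hf i).trans_ne hg)).eventually (ge_mem_nhds hε)
  filter_upwards [eventually_ge_atTop K₀, (eventually_all_finset (Finset.range I)).2
    fun i _ => hearly i] with K hK hKearly
  refine iSup_le fun i => ?_
  rcases lt_or_ge i I with hi | hi
  · exact hKearly i (Finset.mem_range.2 hi)
  · exact (tailSum_antitone _ hK).trans (hI i hi).le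

end Tails

section Convolution

variable {G : Type*} [Group G] {μ σ τ : G → ℝ}

theorem tsum_tsum_inv_mul (F : G → G → ℝ≥0∞) :
    ∑' z, ∑' x, F x (x⁻¹ * z) = ∑' x, ∑' y, F x y := by
  rw [ENNReal.tsum_comm]
  exact tsum_congr fun x => (Equiv.mulLeft x⁻¹).tsum_eq (F x)

theorem tsum_tsum_mul {X Y : Type*} (f : X → ℝ≥0∞) (g : Y → ℝ≥0∞) :
    ∑' x, ∑' y, f x * g y = (∑' x, f x) * ∑' y, g y := by
  simp_rw [ENNReal.tsum_mul_left, ENNReal.tsum_mul_right]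

theorem ofReal_conv (hμ : IsProb μ) (hσ : IsProb σ) (z : G) :
    ENNReal.ofReal (conv μ σ z) = ∑' x, ENNReal.ofReal (μ x) * ENNReal.ofReal (σ (x⁻¹ * z)) := by
  rw [conv, ENNReal.ofReal_tsum_of_nonneg (fun x => mul_nonneg (hμ.1 x) (hσ.1 _))
    (hμ.summable.of_nonneg_of_le (fun x => mul_nonneg (hμ.1 x) (hσ.1 _))
      fun x => mul_le_of_le_one_right (hμ.1 x) (hσ.le_one _))]
  simp_rw [ENNReal.ofReal_mul (hμ.1 _)]

theorem tsum_mul_ofReal_conv (hμ : IsProb μ) (hσ : IsProb σ) (w : G → ℝ≥0∞) :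
    ∑' z, w z * ENNReal.ofReal (conv μ σ z) =
      ∑' x, ∑' y, w (x * y) * (ENNReal.ofReal (μ x) * ENNReal.ofReal (σ y)) := by
  simp_rw [ofReal_conv hμ hσ, ← ENNReal.tsum_mul_left, ← tsum_tsum_inv_mul
    (fun x y => w (x * y) * (ENNReal.ofReal (μ x) * ENNReal.ofReal (σ y))), mul_inv_cancel_left]

theorem conv_nonneg (hμ : IsProb μ) (hσ : IsProb σ) (z : G) : 0 ≤ conv μ σ z :=
  tsum_nonneg fun x => mul_nonneg (hμ.1 x) (hσ.1 _)

theorem IsProb.conv (hμ : IsProb μ) (hσ : IsProb σ) : IsProb (conv μ σ) := by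
  refine .of_tsum_ofReal (conv_nonneg hμ hσ) ?_
  simpa [tsum_tsum_mul, hμ.tsum_ofReal, hσ.tsum_ofReal] using tsum_mul_ofReal_conv hμ hσ 1

theorem conv_assoc (hμ : IsProb μ) (hσ : IsProb σ) (hτ : IsProb τ) :
    conv (conv μ σ) τ = conv μ (conv σ τ) := by
  funext z
  rw [← ENNReal.ofReal_eq_ofReal_iff (conv_nonneg (hμ.conv hσ) hτ z)
    (conv_nonneg hμ (hσ.conv hτ) z), ofReal_conv (hμ.conv hσ) hτ, ofReal_conv hμ (hσ.conv hτ)]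
  simp_rw [ofReal_conv hμ hσ, ofReal_conv hσ hτ, ← ENNReal.tsum_mul_right, ← ENNReal.tsum_mul_left]
  rw [ENNReal.tsum_comm]
  refine tsum_congr fun x => ?_
  rw [← (Equiv.mulLeft x).tsum_eq]
  simp [mul_assoc]

end Convolution

section ConvolutionEntropy

variable {G : Type*} [Group G] {μ σ : G → ℝ}

theorem ofReal_negMulLog_mul {a b : ℝ} (ha : 0 ≤ a) (ha1 : a ≤ 1) (hb : 0 ≤ b) (hb1 : b ≤ 1) :
    ENNReal.ofReal (negMulLog (a * b)) =
      ENNReal.ofReal (negMulLog a) * ENNReal.ofReal b +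
        ENNReal.ofReal a * ENNReal.ofReal (negMulLog b) := by
  rw [negMulLog_mul, ENNReal.ofReal_add (mul_nonneg hb (negMulLog_nonneg ha ha1))
    (mul_nonneg ha (negMulLog_nonneg hb hb1)), ENNReal.ofReal_mul hb, ENNReal.ofReal_mul ha,
    mul_comm (ENNReal.ofReal b)]

theorem tsum_mul_ofReal_negMulLog_conv_le (hμ : IsProb μ) (hσ : IsProb σ) (w : G → ℝ≥0∞) :
    ∑' z, w z * ENNReal.ofReal (negMulLog (conv μ σ z)) ≤
      ∑' x, ∑' y, w (x * y) * (ENNReal.ofReal (negMulLog (μ x)) * ENNReal.ofReal (σ y) +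
        ENNReal.ofReal (μ x) * ENNReal.ofReal (negMulLog (σ y))) := by
  have hterm (x y : G) := ofReal_negMulLog_mul (hμ.1 x) (hμ.le_one x) (hσ.1 y) (hσ.le_one y)
  calc ∑' z, w z * ENNReal.ofReal (negMulLog (conv μ σ z))
      ≤ ∑' z, w z * ∑' x, ENNReal.ofReal (negMulLog (μ x * σ (x⁻¹ * z))) := by
        refine ENNReal.tsum_le_tsum fun z => mul_le_mul_right (ofReal_negMulLog_le_tsum
          (fun x => mul_nonneg (hμ.1 x) (hσ.1 _)) ?_) _
        exact (hμ.summable.of_nonneg_of_le (fun x => mul_nonneg (hμ.1 x) (hσ.1 _))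
          fun x => mul_le_of_le_one_right (hμ.1 x) (hσ.le_one _)).hasSum
    _ = ∑' x, ∑' y, w (x * y) * ENNReal.ofReal (negMulLog (μ x * σ y)) := by
        simp_rw [← ENNReal.tsum_mul_left, ← tsum_tsum_inv_mul
          (fun x y => w (x * y) * ENNReal.ofReal (negMulLog (μ x * σ y))), mul_inv_cancel_left]
    _ = _ := by simp_rw [hterm]

theorem eEntropy_conv_le (hμ : IsProb μ) (hσ : IsProb σ) :
    eEntropy (conv μ σ) ≤ eEntropy μ + eEntropy σ := by
  simpa [eEntropy, ENNReal.tsum_add, tsum_tsum_mul, hμ.tsum_ofReal, hσ.tsum_ofReal] using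
    tsum_mul_ofReal_negMulLog_conv_le hμ hσ 1

/-- Jensen's inequality for the concave `negMulLog`, at each point of `μ * σ`. -/
theorem eEntropy_le_eEntropy_conv (hμ : IsProb μ) (hσ : IsProb σ) :
    eEntropy σ ≤ eEntropy (conv μ σ) := by
  have hjensen (z : G) : ∑' x, ENNReal.ofReal (μ x) * ENNReal.ofReal (negMulLog (σ (x⁻¹ * z))) ≤
      ENNReal.ofReal (negMulLog (conv μ σ z)) := by
    simp_rw [← ENNReal.ofReal_mul (hμ.1 _)]
    rw [← ENNReal.ofReal_tsum_of_nonneg (fun x => mul_nonneg (hμ.1 x) (hσ.negMulLog_nonneg _))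
      (hμ.summable.of_nonneg_of_le (fun x => mul_nonneg (hμ.1 x) (hσ.negMulLog_nonneg _))
        fun x => mul_le_of_le_one_right (hμ.1 x) (hσ.negMulLog_le_one _))]
    exact ENNReal.ofReal_le_ofReal
      (tsum_mul_negMulLog_le_negMulLog_tsum hμ.1 hμ.2 (fun x => hσ.1 _) fun x => hσ.le_one _)
  calc eEntropy σ = ∑' x, ∑' y, ENNReal.ofReal (μ x) * ENNReal.ofReal (negMulLog (σ y)) := by
        rw [tsum_tsum_mul, hμ.tsum_ofReal, one_mul, eEntropy]
    _ = ∑' z, ∑' x, ENNReal.ofReal (μ x) * ENNReal.ofReal (negMulLog (σ (x⁻¹ * z))) :=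
        (tsum_tsum_inv_mul fun x y => _).symm
    _ ≤ eEntropy (conv μ σ) := ENNReal.tsum_le_tsum hjensen

variable [DecidableEq G]

theorem indicator_compl_mul_le (K₁ K₂ : Finset G) (x y : G) :
    (↑(K₁ * K₂) : Set G)ᶜ.indicator (1 : G → ℝ≥0∞) (x * y) ≤
      (K₁ : Set G)ᶜ.indicator 1 x + (K₂ : Set G)ᶜ.indicator 1 y := by
  simp only [Set.indicator_apply]
  split_ifs <;> simp_all [Set.mul_mem_mul]

theorem tsum_tsum_add_mul_mul {X : Type*} (a b f g : X → ℝ≥0∞) :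
    ∑' x, ∑' y, (a x + b y) * (f x * g y) =
      (∑' x, a x * f x) * ∑' y, g y + (∑' x, f x) * ∑' y, b y * g y := by
  rw [← tsum_tsum_mul, ← tsum_tsum_mul, ← ENNReal.tsum_add]
  refine tsum_congr fun x => ?_
  rw [← ENNReal.tsum_add]
  exact tsum_congr fun y => by ring

theorem tailSum_conv_le (hμ : IsProb μ) (hσ : IsProb σ) (K₁ K₂ : Finset G) :
    tailSum (fun z => ENNReal.ofReal (conv μ σ z)) (K₁ * K₂) ≤
      tailSum (fun x => ENNReal.ofReal (μ x)) K₁ + tailSum (fun y => ENNReal.ofReal (σ y)) K₂ := by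
  simp only [tailSum_eq_tsum_indicator_mul]
  rw [tsum_mul_ofReal_conv hμ hσ]
  calc _ ≤ ∑' x, ∑' y, ((K₁ : Set G)ᶜ.indicator 1 x + (K₂ : Set G)ᶜ.indicator 1 y) *
          (ENNReal.ofReal (μ x) * ENNReal.ofReal (σ y)) := by
        gcongr with x y
        exact indicator_compl_mul_le K₁ K₂ x y
    _ = _ := by rw [tsum_tsum_add_mul_mul, hμ.tsum_ofReal, hσ.tsum_ofReal, mul_one, one_mul]

theorem tailSum_negMulLog_conv_le (hμ : IsProb μ) (hσ : IsProb σ) (K₁ K₂ : Finset G) :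
    tailSum (fun z => ENNReal.ofReal (negMulLog (conv μ σ z))) (K₁ * K₂) ≤
      (tailSum (fun x => ENNReal.ofReal (negMulLog (μ x))) K₁ +
          tailSum (fun x => ENNReal.ofReal (μ x)) K₁ * eEntropy σ) +
        (tailSum (fun y => ENNReal.ofReal (negMulLog (σ y))) K₂ +
          tailSum (fun y => ENNReal.ofReal (σ y)) K₂ * eEntropy μ) := by
  simp only [tailSum_eq_tsum_indicator_mul]
  refine (tsum_mul_ofReal_negMulLog_conv_le hμ hσ _).trans ?_
  calc _ ≤ ∑' x, ∑' y, ((K₁ : Set G)ᶜ.indicator 1 x + (K₂ : Set G)ᶜ.indicator 1 y) *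
          (ENNReal.ofReal (negMulLog (μ x)) * ENNReal.ofReal (σ y) +
            ENNReal.ofReal (μ x) * ENNReal.ofReal (negMulLog (σ y))) := by
        gcongr with x y
        exact indicator_compl_mul_le K₁ K₂ x y
    _ = _ := by
        simp_rw [mul_add, ENNReal.tsum_add]
        rw [tsum_tsum_add_mul_mul, tsum_tsum_add_mul_mul, hμ.tsum_ofReal, hσ.tsum_ofReal, eEntropy,
          eEntropy]
        ring

end ConvolutionEntropy

section ConvolutionPower

variable {G : Type*} [Group G] [DecidableEq G] {μ : G → ℝ}

theorem conv_convPow_zero (μ σ : G → ℝ) : conv μ (convPow σ 0) = μ := by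
  funext z
  rw [conv, tsum_eq_single z fun x hx => by simp [convPow, inv_mul_eq_one, hx]]
  simp [convPow]

theorem convPow_zero_conv (μ σ : G → ℝ) : conv (convPow σ 0) μ = μ := by
  funext z
  rw [conv, tsum_eq_single 1 fun x hx => by simp [convPow, hx]]
  simp [convPow]

theorem convPow_one (μ : G → ℝ) : convPow μ 1 = μ := conv_convPow_zero μ μ

theorem IsProb.convPow (hμ : IsProb μ) : ∀ n, IsProb (convPow μ n)
  | 0 => ⟨fun x => by by_cases h : x = 1 <;> simp [_root_.convPow, h],
      by simpa [_root_.convPow] using hasSum_ite_eq (1 : G) (1 : ℝ)⟩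
  | n + 1 => hμ.conv (hμ.convPow n)

theorem convPow_add (hμ : IsProb μ) (m n : ℕ) :
    convPow μ (m + n) = conv (convPow μ m) (convPow μ n) := by
  induction m with
  | zero => rw [zero_add, convPow_zero_conv]
  | succ m ih =>
    rw [Nat.add_right_comm]
    exact (congrArg (conv μ) ih).trans (conv_assoc hμ (hμ.convPow m) (hμ.convPow n)).symm

theorem eEntropy_convPow_zero (μ : G → ℝ) : eEntropy (convPow μ 0) = 0 :=
  ENNReal.tsum_eq_zero.2 fun x => by by_cases h : x = 1 <;> simp [convPow, h]

theorem eEntropy_convPow_le (hμ : IsProb μ) (n : ℕ) :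
    eEntropy (convPow μ n) ≤ n * eEntropy μ := by
  induction n with
  | zero => simp [eEntropy_convPow_zero]
  | succ n ih =>
    calc eEntropy (convPow μ (n + 1)) ≤ eEntropy μ + eEntropy (convPow μ n) :=
          eEntropy_conv_le hμ (hμ.convPow n)
      _ ≤ eEntropy μ + n * eEntropy μ := by gcongr
      _ = (n + 1 : ℕ) * eEntropy μ := by push_cast; ring

theorem eEntropy_convPow_ne_top (hμ : IsProb μ) (h : eEntropy μ ≠ ⊤) (n : ℕ) :
    eEntropy (convPow μ n) ≠ ⊤ :=
  ne_top_of_le_ne_top (ENNReal.mul_ne_top (ENNReal.natCast_ne_top n) h) (eEntropy_convPow_le hμ n)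

theorem eEntropy_convPow_eq_top (hμ : IsProb μ) (h : eEntropy μ = ⊤) {n : ℕ} (hn : n ≠ 0) :
    eEntropy (convPow μ n) = ⊤ := by
  have hmono : Monotone fun n => eEntropy (convPow μ n) :=
    monotone_nat_of_le_succ fun n => eEntropy_le_eEntropy_conv hμ (hμ.convPow n)
  refine top_le_iff.1 (Eq.trans_le ?_ (hmono (Nat.one_le_iff_ne_zero.2 hn)))
  simp [convPow_one, h]

end ConvolutionPower

section AsymptoticEntropy

variable {G : Type*} [Group G] [DecidableEq G] {μ : G → ℝ}

theorem asympEnt_eq_zero_of_eEntropy_eq_top (hμ : IsProb μ) (h : eEntropy μ = ⊤) :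
    asympEnt μ = 0 := by
  have hzero (n : ℕ) : entropy (convPow μ n) / n = 0 := by
    rcases eq_or_ne n 0 with rfl | hn
    · simp
    · rw [entropy_eq_toReal (hμ.convPow n), eEntropy_convPow_eq_top hμ h hn, ENNReal.toReal_top,
        zero_div]
  simp [asympEnt, hzero]

theorem subadditive_entropy_convPow (hμ : IsProb μ) (h : eEntropy μ ≠ ⊤) :
    Subadditive fun n => entropy (convPow μ n) := fun m n => by
  have hle : eEntropy (convPow μ (m + n)) ≤ eEntropy (convPow μ m) + eEntropy (convPow μ n) := by
    rw [convPow_add hμ]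
    exact eEntropy_conv_le (hμ.convPow m) (hμ.convPow n)
  have hfin := eEntropy_convPow_ne_top hμ h
  show entropy _ ≤ entropy _ + entropy _
  rw [entropy_eq_toReal (hμ.convPow n)]
  exact entropy_le_add_of_eEntropy_le (hμ.convPow _) (hμ.convPow m) (hfin m) (hfin n) hle

theorem bddBelow_entropy_convPow_div (hμ : IsProb μ) :
    BddBelow (Set.range fun n : ℕ => entropy (convPow μ n) / n) :=
  ⟨0, Set.forall_mem_range.2 fun n =>
    div_nonneg (hμ.convPow n).entropy_nonneg n.cast_nonneg⟩

theorem asympEnt_eq_lim (hμ : IsProb μ) (h : eEntropy μ ≠ ⊤) :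
    asympEnt μ = (subadditive_entropy_convPow hμ h).lim :=
  ((subadditive_entropy_convPow hμ h).tendsto_lim (bddBelow_entropy_convPow_div hμ)).limsup_eq

theorem tendsto_entropy_convPow_div (hμ : IsProb μ) (h : eEntropy μ ≠ ⊤) :
    Tendsto (fun n : ℕ => entropy (convPow μ n) / n) atTop (𝓝 (asympEnt μ)) :=
  asympEnt_eq_lim hμ h ▸
    (subadditive_entropy_convPow hμ h).tendsto_lim (bddBelow_entropy_convPow_div hμ)

theorem asympEnt_le_entropy_convPow_div (hμ : IsProb μ) {N : ℕ} (hN : N ≠ 0) :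
    asympEnt μ ≤ entropy (convPow μ N) / N := by
  by_cases h : eEntropy μ = ⊤
  · rw [asympEnt_eq_zero_of_eEntropy_eq_top hμ h]
    exact div_nonneg (hμ.convPow N).entropy_nonneg N.cast_nonneg
  · exact asympEnt_eq_lim hμ h ▸
      (subadditive_entropy_convPow hμ h).lim_le_div (bddBelow_entropy_convPow_div hμ) hN

theorem asympEnt_nonneg (hμ : IsProb μ) : 0 ≤ asympEnt μ := by
  by_cases h : eEntropy μ = ⊤
  · rw [asympEnt_eq_zero_of_eEntropy_eq_top hμ h]
  · exact ge_of_tendsto' (tendsto_entropy_convPow_div hμ h) fun n =>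
      div_nonneg (hμ.convPow n).entropy_nonneg n.cast_nonneg

end AsymptoticEntropy

section Convergence

variable {ι X : Type*} {l : Filter ι}

/-- Scheffé's lemma: `∑ |μᵢ - ν| = 2 ∑ (ν - μᵢ)⁺`, and the right side is dominated by `ν`. -/
theorem tendsto_tsum_abs_sub {μ : ι → X → ℝ} {ν : X → ℝ} (hμ : ∀ i, IsProb (μ i)) (hν : IsProb ν)
    (hlim : ∀ x, Tendsto (fun i => μ i x) l (𝓝 (ν x))) :
    Tendsto (fun i => ∑' x, |μ i x - ν x|) l (𝓝 0) := by
  have hle (i : ι) (x : X) : max (ν x - μ i x) 0 ≤ ν x :=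
    max_le (by linarith [(hμ i).1 x]) (hν.1 x)
  have habs (i : ι) : ∑' x, |μ i x - ν x| = 2 * ∑' x, max (ν x - μ i x) 0 := by
    have hpos : HasSum (fun x => max (ν x - μ i x) 0) (∑' x, max (ν x - μ i x) 0) :=
      (hν.summable.of_nonneg_of_le (fun x => le_max_right _ _) (hle i)).hasSum
    have h := (hpos.mul_left 2).add ((hμ i).2.sub hν.2)
    rw [sub_self, add_zero] at h
    refine h.tsum_eq ▸ tsum_congr fun x => ?_
    rcases le_total (μ i x) (ν x) with hx | hx
    · rw [abs_of_nonpos (by linarith), max_eq_left (by linarith)]; ring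
    · rw [abs_of_nonneg (by linarith), max_eq_right (by linarith)]; ring
  have hpart : Tendsto (fun i => ∑' x, max (ν x - μ i x) 0) l (𝓝 (∑' _ : X, (0 : ℝ))) :=
    tendsto_tsum_of_dominated_convergence hν.summable
      (fun x => by
        simpa using ((tendsto_const_nhds : Tendsto (fun _ => ν x) l _).sub (hlim x)).max
          (tendsto_const_nhds : Tendsto (fun _ => (0 : ℝ)) l _))
      (.of_forall fun i x => by rw [Real.norm_of_nonneg (le_max_right _ _)]; exact hle i x)
  simpa [habs] using hpart.const_mul 2

theorem tendsto_conv_apply {G : Type*} [Group G] {μ σ : ι → G → ℝ} {μ' σ' : G → ℝ}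
    (hμ : ∀ i, IsProb (μ i)) (hμ' : IsProb μ') (hσ : ∀ i, IsProb (σ i))
    (hμlim : ∀ x, Tendsto (fun i => μ i x) l (𝓝 (μ' x)))
    (hσlim : ∀ x, Tendsto (fun i => σ i x) l (𝓝 (σ' x))) (z : G) :
    Tendsto (fun i => conv (μ i) (σ i) z) l (𝓝 (conv μ' σ' z)) := by
  have hbound (i : ι) (x : G) : ‖(μ i x - μ' x) * σ i (x⁻¹ * z)‖ ≤ |μ i x - μ' x| := by
    rw [norm_mul, Real.norm_eq_abs, Real.norm_of_nonneg ((hσ i).1 _)]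
    exact mul_le_of_le_one_right (abs_nonneg _) ((hσ i).le_one _)
  have hsumm (i : ι) : Summable fun x => |μ i x - μ' x| :=
    ((hμ i).summable.sub hμ'.summable).abs
  have hsplit (i : ι) : conv (μ i) (σ i) z =
      ∑' x, (μ i x - μ' x) * σ i (x⁻¹ * z) + ∑' x, μ' x * σ i (x⁻¹ * z) := by
    rw [conv, ← Summable.tsum_add (.of_norm_bounded (hsumm i) (hbound i))
      (hμ'.summable.of_nonneg_of_le (fun x => mul_nonneg (hμ'.1 x) ((hσ i).1 _))
        fun x => mul_le_of_le_one_right (hμ'.1 x) ((hσ i).le_one _))]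
    exact tsum_congr fun x => by ring
  have hdiff : Tendsto (fun i => ∑' x, (μ i x - μ' x) * σ i (x⁻¹ * z)) l (𝓝 0) :=
    squeeze_zero_norm (fun i => (norm_tsum_le_tsum_norm
      (.of_nonneg_of_le (fun _ => norm_nonneg _) (hbound i) (hsumm i))).trans
        (Summable.tsum_le_tsum (hbound i) (.of_nonneg_of_le (fun _ => norm_nonneg _) (hbound i)
          (hsumm i)) (hsumm i))) (tendsto_tsum_abs_sub hμ hμ' hμlim)
  have hmain : Tendsto (fun i => ∑' x, μ' x * σ i (x⁻¹ * z)) l (𝓝 (conv μ' σ' z)) :=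
    tendsto_tsum_of_dominated_convergence hμ'.summable (fun x => (hσlim _).const_mul _)
      (.of_forall fun i x => by
        rw [Real.norm_of_nonneg (mul_nonneg (hμ'.1 x) ((hσ i).1 _))]
        exact mul_le_of_le_one_right (hμ'.1 x) ((hσ i).le_one _))
  simpa [hsplit] using hdiff.add hmain

theorem tendsto_convPow_apply {G : Type*} [Group G] [DecidableEq G] {μ : ι → G → ℝ}
    {ν : G → ℝ} (hμ : ∀ i, IsProb (μ i)) (hν : IsProb ν)
    (hlim : ∀ x, Tendsto (fun i => μ i x) l (𝓝 (ν x))) (n : ℕ) (z : G) :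
    Tendsto (fun i => convPow (μ i) n z) l (𝓝 (convPow ν n z)) := by
  induction n generalizing z with
  | zero => exact tendsto_const_nhds
  | succ n ih => exact tendsto_conv_apply hμ hν (fun i => (hμ i).convPow n) hlim ih z

theorem tendsto_sum_ofReal_negMulLog {μ : ι → X → ℝ} {ν : X → ℝ}
    (hlim : ∀ x, Tendsto (fun i => μ i x) l (𝓝 (ν x))) (K : Finset X) :
    Tendsto (fun i => ∑ x ∈ K, ENNReal.ofReal (negMulLog (μ i x))) l
      (𝓝 (∑ x ∈ K, ENNReal.ofReal (negMulLog (ν x)))) :=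
  tendsto_finsetSum K fun x _ =>
    ENNReal.tendsto_ofReal ((continuous_negMulLog.tendsto _).comp (hlim x))

theorem eEntropy_le_liminf [l.NeBot] {μ : ι → X → ℝ} {ν : X → ℝ}
    (hlim : ∀ x, Tendsto (fun i => μ i x) l (𝓝 (ν x))) :
    eEntropy ν ≤ liminf (fun i => eEntropy (μ i)) l := by
  rw [eEntropy, ENNReal.tsum_eq_iSup_sum]
  refine iSup_le fun K => ?_
  rw [← (tendsto_sum_ofReal_negMulLog hlim K).liminf_eq]
  exact liminf_le_liminf (.of_forall fun i => ENNReal.sum_le_tsum K)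

theorem eventually_eEntropy_le_add {μ : ι → X → ℝ} {ν : X → ℝ}
    (hlim : ∀ x, Tendsto (fun i => μ i x) l (𝓝 (ν x))) (K : Finset X) {ε : ℝ≥0∞} (hε : 0 < ε) :
    ∀ᶠ i in l, eEntropy (μ i) ≤
      eEntropy ν + ε + tailSum (fun x => ENNReal.ofReal (negMulLog (μ i x))) K := by
  have hK : ∑ x ∈ K, ENNReal.ofReal (negMulLog (ν x)) < eEntropy ν + ε :=
    (ENNReal.lt_add_right (ENNReal.sum_ne_top.2 fun _ _ => ENNReal.ofReal_ne_top) hε.ne').trans_le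
      (add_le_add (ENNReal.sum_le_tsum K) le_rfl)
  filter_upwards [(tendsto_sum_ofReal_negMulLog hlim K).eventually (gt_mem_nhds hK)] with i hi
  rw [eEntropy, ← sum_add_tailSum _ K]
  exact add_le_add hi.le le_rfl

end Convergence

section Tightness

variable {ι : Type*}

theorem antitone_iSup_tailSum {X : Type*} (f : ι → X → ℝ≥0∞) :
    Antitone fun K => ⨆ i, tailSum (f i) K :=
  fun _ _ h => iSup_mono fun _ => tailSum_antitone _ h

/-- Only the members of finite entropy count: for the others the tail series in `EntTight`
diverge, so their junk value `0` makes the condition vacuous. -/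
theorem EntTight.uniformlyTight {X : Type*} {μ : ι → X → ℝ} (hμ : ∀ i, IsProb (μ i))
    (he : EntTight μ) :
    UniformlyTight fun (i : {i // eEntropy (μ i) ≠ ⊤}) x => ENNReal.ofReal (negMulLog (μ i x)) := by
  refine ENNReal.tendsto_nhds_zero.2 fun ε hε => ?_
  obtain ⟨r, -, hr0, hrε⟩ := ENNReal.lt_iff_exists_real_btwn.1 hε
  obtain ⟨K, hK⟩ := he r (ENNReal.ofReal_pos.1 hr0)
  filter_upwards [eventually_ge_atTop K] with K' hK'
  refine iSup_le fun i => (tailSum_antitone _ hK').trans ?_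
  have hfin : tailSum (fun x => ENNReal.ofReal (negMulLog (μ i x))) K ≠ ⊤ :=
    ne_top_of_le_ne_top i.2 (tailSum_le_tsum _ K)
  have hreal : ∑' x, (K : Set X)ᶜ.indicator (fun y => negMulLog (μ i y)) x =
      (tailSum (fun x => ENNReal.ofReal (negMulLog (μ i x))) K).toReal := by
    rw [tsum_eq_toReal_tsum_ofReal fun x => Set.indicator_nonneg
      (fun y _ => (hμ i).negMulLog_nonneg y) x, tailSum_eq_tsum_indicator]
    congr 1
    refine tsum_congr fun x => ?_
    by_cases hx : x ∈ (K : Set X)ᶜ <;> simp [hx]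
  rw [← ENNReal.ofReal_toReal hfin, ← hreal]
  exact (ENNReal.ofReal_le_ofReal (hK i).le).trans hrε.le

variable {G : Type*} [Group G] [DecidableEq G]

theorem tendsto_zero_of_apply_mul_le {T A B : Finset G → ℝ≥0∞} (hT : Antitone T)
    (hA : Tendsto A atTop (𝓝 0)) (hB : Tendsto B atTop (𝓝 0))
    (h : ∀ K₁ K₂, T (K₁ * K₂) ≤ A K₁ + B K₂) : Tendsto T atTop (𝓝 0) := by
  refine ENNReal.tendsto_nhds_zero.2 fun ε hε => ?_
  have hε2 : 0 < ε / 2 := ENNReal.half_pos hε.ne'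
  obtain ⟨K₁, hK₁⟩ := (ENNReal.tendsto_nhds_zero.1 hA _ hε2).exists
  obtain ⟨K₂, hK₂⟩ := (ENNReal.tendsto_nhds_zero.1 hB _ hε2).exists
  filter_upwards [eventually_ge_atTop (K₁ * K₂)] with K hK
  calc T K ≤ T (K₁ * K₂) := hT hK
    _ ≤ ε / 2 + ε / 2 := (h K₁ K₂).trans (add_le_add hK₁ hK₂)
    _ = ε := ENNReal.add_halves ε

theorem uniformlyTight_conv {μ σ : ι → G → ℝ} (hμ : ∀ i, IsProb (μ i))
    (hσ : ∀ i, IsProb (σ i)) (hμt : UniformlyTight fun i x => ENNReal.ofReal (μ i x))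
    (hσt : UniformlyTight fun i x => ENNReal.ofReal (σ i x)) :
    UniformlyTight fun i z => ENNReal.ofReal (conv (μ i) (σ i) z) :=
  tendsto_zero_of_apply_mul_le (antitone_iSup_tailSum _) hμt hσt fun K₁ K₂ => iSup_le fun i =>
    (tailSum_conv_le (hμ i) (hσ i) K₁ K₂).trans
      (add_le_add (le_iSup_of_le i le_rfl) (le_iSup_of_le i le_rfl))

theorem uniformlyTight_negMulLog_conv {μ σ : ι → G → ℝ} (hμ : ∀ i, IsProb (μ i))
    (hσ : ∀ i, IsProb (σ i)) (hμt : UniformlyTight fun i x => ENNReal.ofReal (μ i x))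
    (hσt : UniformlyTight fun i x => ENNReal.ofReal (σ i x))
    (hμe : UniformlyTight fun i x => ENNReal.ofReal (negMulLog (μ i x)))
    (hσe : UniformlyTight fun i x => ENNReal.ofReal (negMulLog (σ i x)))
    {Cμ Cσ : ℝ≥0∞} (hCμ : Cμ ≠ ⊤) (hCσ : Cσ ≠ ⊤) (hμC : ∀ i, eEntropy (μ i) ≤ Cμ)
    (hσC : ∀ i, eEntropy (σ i) ≤ Cσ) :
    UniformlyTight fun i z => ENNReal.ofReal (negMulLog (conv (μ i) (σ i) z)) := by
  refine tendsto_zero_of_apply_mul_le (antitone_iSup_tailSum _)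
    (by simpa using hμe.add (ENNReal.Tendsto.mul_const hμt (.inr hCσ)))
    (by simpa using hσe.add (ENNReal.Tendsto.mul_const hσt (.inr hCμ)))
    fun K₁ K₂ => iSup_le fun i => (tailSum_negMulLog_conv_le (hμ i) (hσ i) K₁ K₂).trans ?_
  gcongr
  exacts [le_iSup_of_le i le_rfl, le_iSup_of_le i le_rfl, hσC i, le_iSup_of_le i le_rfl,
    le_iSup_of_le i le_rfl, hμC i]

theorem uniformlyTight_convPow {ρ : ι → G → ℝ} (hρ : ∀ i, IsProb (ρ i))
    (hm : UniformlyTight fun i x => ENNReal.ofReal (ρ i x))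
    (he : UniformlyTight fun i x => ENNReal.ofReal (negMulLog (ρ i x))) (n : ℕ) :
    (UniformlyTight fun i x => ENNReal.ofReal (convPow (ρ i) n x)) ∧
      UniformlyTight fun i x => ENNReal.ofReal (negMulLog (convPow (ρ i) n x)) := by
  obtain ⟨C, hC, hρC⟩ := he.exists_eEntropy_le hρ
  induction n with
  | zero =>
    refine ⟨uniformlyTight_const (f := fun x => ENNReal.ofReal (if x = 1 then 1 else 0)) ?_,
      uniformlyTight_const (f := fun x => ENNReal.ofReal (negMulLog (if x = 1 then 1 else 0))) ?_⟩
    · simp [apply_ite]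
    · simp [apply_ite]
  | succ n ih =>
    have hρn (i : ι) : IsProb (convPow (ρ i) n) := (hρ i).convPow n
    have hCn (i : ι) : eEntropy (convPow (ρ i) n) ≤ n * C :=
      (eEntropy_convPow_le (hρ i) n).trans (by gcongr; exact hρC i)
    exact ⟨uniformlyTight_conv hρ hρn hm ih.1, uniformlyTight_negMulLog_conv hρ hρn hm ih.1 he
      ih.2 hC (ENNReal.mul_ne_top (ENNReal.natCast_ne_top n) hC) hρC hCn⟩

end Tightness

theorem eventually_asympEnt_le {G : Type*} [Group G] [DecidableEq G] {μ : ℕ → G → ℝ}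
    {ν : G → ℝ} (hp : ∀ i, IsProb (μ i)) (hν : IsProb ν)
    (hw : ∀ x, Tendsto (fun i => μ i x) atTop (𝓝 (ν x))) (he : EntTight μ)
    (hνfin : eEntropy ν ≠ ⊤) {N : ℕ} (hN : N ≠ 0) {δ : ℝ} (hδ : 0 < δ) :
    ∀ᶠ i in atTop, asympEnt (μ i) ≤ entropy (convPow ν N) / N + δ := by
  have hmass : UniformlyTight fun i x => ENNReal.ofReal (μ i x) :=
    uniformlyTight_of_tendsto (by simp [hν.tsum_ofReal]) (fun i => by simp [(hp i).tsum_ofReal,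
      hν.tsum_ofReal]) fun x => ENNReal.tendsto_ofReal (hw x)
  have hδ2 : 0 < ENNReal.ofReal (δ / 2) := ENNReal.ofReal_pos.2 (half_pos hδ)
  obtain ⟨K, hK⟩ := ((uniformlyTight_convPow (ρ := fun i : {i // eEntropy (μ i) ≠ ⊤} => μ i)
    (fun i => hp i) (hmass.comp Subtype.val) (he.uniformlyTight hp) N).2.exists_tailSum_le hδ2)
  filter_upwards [eventually_eEntropy_le_add (tendsto_convPow_apply hp hν hw N) K hδ2] with i hi
  by_cases hfin : eEntropy (μ i) = ⊤
  · rw [asympEnt_eq_zero_of_eEntropy_eq_top (hp i) hfin]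
    have := (hν.convPow N).entropy_nonneg
    positivity
  have hle : entropy (convPow (μ i) N) ≤ entropy (convPow ν N) + δ := by
    have h := entropy_le_add_of_eEntropy_le ((hp i).convPow N) (hν.convPow N)
      (eEntropy_convPow_ne_top hν hνfin N) (by finiteness)
      (hi.trans ((add_le_add le_rfl (hK ⟨i, hfin⟩)).trans_eq (add_assoc _ _ _)))
    rwa [← ENNReal.ofReal_add (half_pos hδ).le (half_pos hδ).le, add_halves,
      ENNReal.toReal_ofReal hδ.le] at h
  have hN1 : (1 : ℝ) ≤ N := Nat.one_le_cast.2 (Nat.one_le_iff_ne_zero.2 hN)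
  calc asympEnt (μ i) ≤ entropy (convPow (μ i) N) / N := asympEnt_le_entropy_convPow_div (hp i) hN
    _ ≤ (entropy (convPow ν N) + δ) / N := by gcongr
    _ ≤ entropy (convPow ν N) / N + δ := by
      rw [add_div]
      gcongr
      exact div_le_self hδ.le hN1

theorem asympEnt_usc_general {G : Type*} [Group G] [DecidableEq G]
    (μ : ℕ → G → ℝ) (ν : G → ℝ)
    (hp : ∀ i, IsProb (μ i)) (hν : IsProb ν)
    (hw : ∀ x, Tendsto (fun i => μ i x) atTop (nhds (ν x)))
    (he : EntTight μ) :
    limsup (fun i => asympEnt (μ i)) atTop ≤ asympEnt ν := by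
  by_cases htop : ∀ᶠ i in atTop, eEntropy (μ i) = ⊤
  · rw [limsup_congr (htop.mono fun i => asympEnt_eq_zero_of_eEntropy_eq_top (hp i)),
      limsup_const]
    exact asympEnt_nonneg hν
  have hνfin : eEntropy ν ≠ ⊤ := by
    obtain ⟨C, hC, hμC⟩ := (he.uniformlyTight hp).exists_eEntropy_le
      (μ := fun i : {i // eEntropy (μ i) ≠ ⊤} => μ i) fun i => hp i
    refine ne_top_of_le_ne_top hC ((eEntropy_le_liminf hw).trans (liminf_le_of_frequently_le' ?_))
    exact (not_eventually.1 htop).mono fun i hi => hμC ⟨i, hi⟩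
  have hcobdd : IsCoboundedUnder (· ≤ ·) atTop fun i => asympEnt (μ i) :=
    isCoboundedUnder_le_of_le atTop fun i => asympEnt_nonneg (hp i)
  refine ge_of_tendsto (tendsto_entropy_convPow_div hν hνfin) ?_
  filter_upwards [eventually_ne_atTop 0] with N hN
  exact le_of_forall_pos_le_add fun δ hδ =>
    limsup_le_of_le hcobdd (eventually_asympEnt_le hp hν hw he hνfin hN hδ)

/-- Upper semi-continuity of asymptotic entropy: if probability measures `μᵢ` on a
countable group converge pointwise to `ν` and the family is entropy-tight, then
`limsup_i h(μᵢ) ≤ h(ν)`. -/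
theorem asympEnt_usc {G : Type*} [Group G] [Countable G] [DecidableEq G]
    (μ : ℕ → G → ℝ) (ν : G → ℝ)
    (hp : ∀ i, IsProb (μ i)) (hν : IsProb ν)
    (hw : ∀ x, Tendsto (fun i => μ i x) atTop (nhds (ν x)))
    (he : EntTight μ) :
    limsup (fun i => asympEnt (μ i)) atTop ≤ asympEnt ν :=
  asympEnt_usc_general μ ν hp hν hw he
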